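/- Let g be a unimodal map topologically conjugate to the tent map f via a homeomorphism h with h ∘ f = g ∘ h, let t ≥ 1, and suppose ψ_t = h ∘ ξ_t ∘ h^{−1} is piecewise linear; let p be the first (smallest) positive kink of ψ_t, so ψ_t is linear on [0,p] with slope ψ_t′(0). Then for every n ≥ 1 and every k with 0 ≤ k ≤ ⌊2^{n−1}/t⌋ such that μ_{n,k}(g) < p, one has μ_{n,tk}(g) = ψ_t′(0)·μ_{n,k}(g). -/
import Mathlib


open Set

/-- The tent map `x ↦ 1 - |1 - 2x|`. -/
noncomputable def tent (x : ℝ) : ℝ := 1 - |1 - 2*x|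

/-- `g` is unimodal with turning point `v`. -/
def IsUnimodalWith (g : ℝ → ℝ) (v : ℝ) : Prop :=
  ContinuousOn g (Icc 0 1) ∧ MapsTo g (Icc 0 1) (Icc 0 1) ∧
  v ∈ Ioo (0:ℝ) 1 ∧ StrictMonoOn g (Icc 0 v) ∧ StrictAntiOn g (Icc v 1) ∧
  g 0 = 0 ∧ g 1 = 0 ∧ g v = 1

/-- `g` is unimodal. -/
def IsUnimodal (g : ℝ → ℝ) : Prop := ∃ v, IsUnimodalWith g v

/-- `φ` is piecewise linear on `[0,1]`. -/
def IsPiecewiseLinear (φ : ℝ → ℝ) : Prop :=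
  ∃ (m : ℕ) (a : ℕ → ℝ), 0 < m ∧ a 0 = 0 ∧ a m = 1 ∧
    (∀ i < m, a i < a (i+1)) ∧
    ∀ i < m, ∃ c d : ℝ, ∀ x ∈ Icc (a i) (a (i+1)), φ x = c * x + d
/-- `φ` is affine on `[s,e]`. -/
def LinOnIcc (φ : ℝ → ℝ) (s e : ℝ) : Prop := ∃ c d : ℝ, ∀ x ∈ Icc s e, φ x = c * x + d

/-- `a` is the first (smallest) positive kink of `φ`:
`φ` is linear on `[0,a]` and on no larger interval `[0,c]`. -/
def FirstKink (φ : ℝ → ℝ) (a : ℝ) : Prop :=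
  0 < a ∧ LinOnIcc φ 0 a ∧ ∀ c, a < c → ¬ LinOnIcc φ 0 c

/-- The complete preimage of `0` under `g` (inside `[0,1]`). -/
def preimZero (g : ℝ → ℝ) : Set ℝ :=
  {x | x ∈ Icc (0:ℝ) 1 ∧ ∃ n : ℕ, 1 ≤ n ∧ g^[n] x = 0}

/-- The map `ξ_t`. -/
noncomputable def xi (t : ℕ) (x : ℝ) : ℝ :=
  (1 - (-1:ℝ) ^ ⌊(t:ℝ) * x⌋) / 2 + (-1:ℝ) ^ ⌊(t:ℝ) * x⌋ * Int.fract ((t:ℝ) * x)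

/-- `μ n k` enumerates, in increasing order, the `2^(n-1)+1` points of `g^{-n}(0)`. -/
def IsMuFamily (g : ℝ → ℝ) (μ : ℕ → ℕ → ℝ) : Prop :=
  ∀ n : ℕ, 1 ≤ n →
    (∀ k ≤ 2^(n-1), μ n k ∈ Icc (0:ℝ) 1 ∧ g^[n] (μ n k) = 0) ∧
    (∀ k < 2^(n-1), μ n k < μ n (k+1)) ∧
    (∀ x ∈ Icc (0:ℝ) 1, g^[n] x = 0 → ∃ k ≤ 2^(n-1), x = μ n k)

/-- `ψ` is monotone (in either direction) on `s`. -/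
def MonoOrAntiOn (ψ : ℝ → ℝ) (s : Set ℝ) : Prop := MonotoneOn ψ s ∨ AntitoneOn ψ s

/-- `[c,d]` is a maximal interval of monotonicity of `ψ` in `[0,1]`. -/
def IsMaxMonoInterval (ψ : ℝ → ℝ) (c d : ℝ) : Prop :=
  0 ≤ c ∧ c < d ∧ d ≤ 1 ∧ MonoOrAntiOn ψ (Icc c d) ∧
  ∀ c' d', 0 ≤ c' → d' ≤ 1 → Icc c d ⊆ Icc c' d' → Icc c d ≠ Icc c' d' →
    ¬ MonoOrAntiOn ψ (Icc c' d')

/-- `ψ` has exactly `N` maximal intervals of monotonicity, cut at points `b 0 < ⋯ < b N`. -/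
def HasExactlyMonoIntervals (ψ : ℝ → ℝ) (N : ℕ) : Prop :=
  ∃ b : ℕ → ℝ, b 0 = 0 ∧ b N = 1 ∧ (∀ i < N, b i < b (i+1)) ∧
    (∀ i < N, MonoOrAntiOn ψ (Icc (b i) (b (i+1)))) ∧
    (∀ i, i + 2 ≤ N → ¬ MonoOrAntiOn ψ (Icc (b i) (b (i+2))))

lemma tent_mem {x : ℝ} (hx : x ∈ Icc (0:ℝ) 1) : tent x ∈ Icc (0:ℝ) 1 := by
  obtain ⟨h0, h1⟩ := hx
  have h2 : |1 - 2*x| ≤ 1 := abs_le.mpr ⟨by linarith, by linarith⟩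
  have h3 : (0:ℝ) ≤ |1 - 2*x| := abs_nonneg _
  constructor <;> simp only [tent] <;> linarith

lemma tent_iter_zero : ∀ n : ℕ, ∀ j : ℕ, j ≤ 2^n → tent^[n+1] ((j:ℝ)/2^n) = 0 := by
  intro n
  induction n with
  | zero =>
    intro j hj
    interval_cases j <;> simp [tent] <;> norm_num
  | succ n ih =>
    intro j hj
    rw [Function.iterate_succ_apply]
    have hNpos : (0:ℝ) < 2^n := by positivity
    rcases le_or_gt j (2^n) with hj2 | hj2
    · have hjr : (j:ℝ) ≤ 2^n := by exact_mod_cast hj2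
      have key : tent ((j:ℝ)/2^(n+1)) = (j:ℝ)/2^n := by
        have h2 : (2:ℝ) * ((j:ℝ)/2^(n+1)) = (j:ℝ)/2^n := by
          rw [pow_succ]; field_simp
        have hnn : (0:ℝ) ≤ 1 - 2*((j:ℝ)/2^(n+1)) := by
          rw [h2]
          have := (div_le_one hNpos).mpr hjr
          linarith
        simp only [tent, abs_of_nonneg hnn]
        linarith
      rw [key]; exact ih j hj2
    · set j' := 2^(n+1) - j with hj'
      have hj'le : j' ≤ 2^n := by
        have : 2^(n+1) = 2^n + 2^n := by ring
        omega
      have hj'r : (j':ℝ) = 2^(n+1) - (j:ℝ) := by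
        have : (j':ℕ) + j = 2^(n+1) := by omega
        have := congrArg (fun x : ℕ => (x:ℝ)) this
        push_cast at this ⊢
        linarith
      have key : tent ((j:ℝ)/2^(n+1)) = (j':ℝ)/2^n := by
        have h2 : (2:ℝ) * ((j:ℝ)/2^(n+1)) = (j:ℝ)/2^n := by
          rw [pow_succ]; field_simp
        have hjr : (2:ℝ)^n ≤ (j:ℝ) := by exact_mod_cast hj2.le
        have hnp : 1 - 2*((j:ℝ)/2^(n+1)) ≤ 0 := by
          rw [h2]
          have : (1:ℝ) ≤ (j:ℝ)/2^n := (one_le_div hNpos).mpr hjr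
          linarith
        have h4 : ((2:ℝ)^(n+1) - (j:ℝ))/2^n = 2 - (j:ℝ)/2^n := by
          rw [pow_succ]; field_simp
        simp only [tent, abs_of_nonpos hnp]
        rw [hj'r, h4]
        linarith [h2]
      rw [key]; exact ih j' hj'le

lemma conj_iter (g h : ℝ → ℝ) (hconj : ∀ x ∈ Icc (0:ℝ) 1, h (tent x) = g (h x)) :
    ∀ n : ℕ, ∀ y ∈ Icc (0:ℝ) 1, tent^[n] y ∈ Icc (0:ℝ) 1 ∧ g^[n] (h y) = h (tent^[n] y) := by
  intro n
  induction n with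
  | zero => intro y hy; simpa using hy
  | succ n ih =>
    intro y hy
    obtain ⟨h2, h3⟩ := ih (tent y) (tent_mem hy)
    exact ⟨by rw [Function.iterate_succ_apply]; exact h2,
      by rw [Function.iterate_succ_apply, Function.iterate_succ_apply, ← hconj y hy, h3]⟩

lemma sigma_ge (σ : ℕ → ℕ) (N : ℕ) (hσ : ∀ i < N, σ i < σ (i+1)) :
    ∀ i j, i ≤ j → j ≤ N → σ i + (j - i) ≤ σ j := by
  intro i j hij hjN
  induction j with
  | zero =>
    have hi0 : i = 0 := Nat.le_zero.mp hij
    subst hi0; omega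
  | succ j ih =>
    rcases Nat.eq_or_lt_of_le hij with rfl | hlt
    · omega
    · have h1 : i ≤ j := Nat.lt_succ_iff.mp hlt
      have h2 := ih h1 (le_trans (Nat.le_succ j) hjN)
      have h3 : σ j < σ (j+1) := hσ j (by omega)
      omega

lemma mono_of_adj (u : ℕ → ℝ) (N : ℕ) (hu : ∀ i < N, u i < u (i+1)) :
    ∀ a b, a < b → b ≤ N → u a < u b := by
  intro a b hab hbN
  induction b with
  | zero => omega
  | succ b ih =>
    rcases Nat.lt_or_ge a b with hc | hc
    · exact lt_trans (ih hc (by omega)) (hu b (by omega))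
    · have : a = b := by omega
      subst this; exact hu a (by omega)

lemma xi_eq (t : ℕ) (x : ℝ) (h0 : 0 ≤ x) (h1 : (t:ℝ) * x ≤ 1) : xi t x = (t:ℝ) * x := by
  have hnn : (0:ℝ) ≤ (t:ℝ) * x := mul_nonneg (Nat.cast_nonneg t) h0
  rcases eq_or_lt_of_le h1 with heq | hlt
  · simp only [xi, heq]
    norm_num
  · have hf : ⌊(t:ℝ) * x⌋ = 0 := Int.floor_eq_zero_iff.mpr ⟨hnn, hlt⟩
    have hfr : Int.fract ((t:ℝ) * x) = (t:ℝ) * x := Int.fract_eq_self.mpr ⟨hnn, hlt⟩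
    simp only [xi, hf, hfr]
    norm_num

/-- if `ψ_t = h ∘ ξ_t ∘ h⁻¹` is piecewise linear with first kink `p` and
slope `sψ` on `[0,p]`, then `μ_{n,tk}(g) = sψ·μ_{n,k}(g)` whenever `μ_{n,k}(g) < p`. -/
theorem mu_t_scaling
    (g h hinv ψt : ℝ → ℝ) (μ : ℕ → ℕ → ℝ) (t : ℕ) (p sψ : ℝ)
    (hg : IsUnimodal g)
    (hhc : ContinuousOn h (Icc 0 1)) (hhb : BijOn h (Icc 0 1) (Icc 0 1))
    (hconj : ∀ x ∈ Icc (0:ℝ) 1, h (tent x) = g (h x))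
    (hinvl : ∀ x ∈ Icc (0:ℝ) 1, hinv (h x) = x)
    (hinvr : ∀ x ∈ Icc (0:ℝ) 1, h (hinv x) = x)
    (ht : 1 ≤ t)
    (hψt : ∀ x ∈ Icc (0:ℝ) 1, ψt x = h (xi t (hinv x)))
    (hψtPL : IsPiecewiseLinear ψt)
    (hp : FirstKink ψt p)
    (hslope : ∃ d0 : ℝ, ∀ x ∈ Icc (0:ℝ) p, ψt x = sψ * x + d0)
    (hμ : IsMuFamily g μ) :
    ∀ n : ℕ, 1 ≤ n → ∀ k ≤ 2^(n-1) / t, μ n k < p → μ n (t*k) = sψ * μ n k := by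
  obtain ⟨d0, hd0⟩ := hslope
  obtain ⟨v, hgc, hgm, hv, hginc, hgdec, hg0, hg1, hgv⟩ := hg
  have h01 : (0:ℝ) ∈ Icc (0:ℝ) 1 := by norm_num
  have h11 : (1:ℝ) ∈ Icc (0:ℝ) 1 := by norm_num
  have hmono : StrictMonoOn h (Icc (0:ℝ) 1) := by
    rcases ContinuousOn.strictMonoOn_of_injOn_Icc' (by norm_num : (0:ℝ) ≤ 1) hhc hhb.injOn
      with hm | ha
    · exact hm
    · exfalso
      obtain ⟨y, hy, hy1⟩ := hhb.surjOn h11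
      have hle : h y ≤ h 0 := by
        rcases eq_or_lt_of_le hy.1 with heq | hlt
        · rw [← heq]
        · exact (ha h01 hy hlt).le
      have hh0 : h 0 = 1 := le_antisymm (hhb.mapsTo h01).2 (hy1 ▸ hle)
      have ht0 : tent 0 = 0 := by simp [tent]
      have hcc := hconj 0 h01
      rw [ht0, hh0, hg1] at hcc
      exact one_ne_zero hcc
  have hh0 : h 0 = 0 := by
    obtain ⟨y, hy, hy0⟩ := hhb.surjOn h01
    have hle : h 0 ≤ h y := by
      rcases eq_or_lt_of_le hy.1 with heq | hlt
      · rw [← heq]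
      · exact (hmono h01 hy hlt).le
    exact le_antisymm (hy0 ▸ hle) (hhb.mapsTo h01).1
  intro n hn k hk hkp
  obtain ⟨m, rfl⟩ : ∃ m, n = m + 1 := ⟨n-1, (Nat.succ_pred_eq_of_pos hn).symm⟩
  obtain ⟨hmem, hadj, hsurj⟩ := hμ (m+1) (by omega)
  have hμmono : ∀ a b, a < b → b ≤ 2^m → μ (m+1) a < μ (m+1) b :=
    mono_of_adj (fun i => μ (m+1) i) (2^m) hadj
  have hNpos : (0:ℝ) < (2:ℝ)^m := by positivity
  have hxmem : ∀ j : ℕ, j ≤ 2^m → ((j:ℝ)/(2:ℝ)^m) ∈ Icc (0:ℝ) 1 := by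
    intro j hj
    have hjr : (j:ℝ) ≤ (2:ℝ)^m := by exact_mod_cast hj
    exact ⟨by positivity, (div_le_one hNpos).mpr hjr⟩
  have hconjit := conj_iter g h hconj
  have hzero : ∀ j : ℕ, j ≤ 2^m →
      h ((j:ℝ)/(2:ℝ)^m) ∈ Icc (0:ℝ) 1 ∧ g^[m+1] (h ((j:ℝ)/(2:ℝ)^m)) = 0 := by
    intro j hj
    have hxj := hxmem j hj
    refine ⟨hhb.mapsTo hxj, ?_⟩
    have h1 := (hconjit (m+1) _ hxj).2
    have h2 : tent^[m+1] ((j:ℝ)/(2:ℝ)^m) = 0 := tent_iter_zero m j hj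
    rw [h1, h2, hh0]
  have hex : ∀ j : ℕ, ∃ s : ℕ, j ≤ 2^m → (s ≤ 2^m ∧ h ((j:ℝ)/(2:ℝ)^m) = μ (m+1) s) := by
    intro j
    by_cases hj : j ≤ 2^m
    · obtain ⟨hx1, hx2⟩ := hzero j hj
      obtain ⟨s, hs1, hs2⟩ := hsurj _ hx1 hx2
      exact ⟨s, fun _ => ⟨hs1, hs2⟩⟩
    · exact ⟨0, fun hc => absurd hc hj⟩
  choose σ hσ using hex
  have hσinc : ∀ i < 2^m, σ i < σ (i+1) := by
    intro i hi
    have h1 := hσ i (le_of_lt hi)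
    have h2 := hσ (i+1) hi
    have hxlt : ((i:ℝ)/(2:ℝ)^m) < (((i+1:ℕ)):ℝ)/(2:ℝ)^m := by
      apply div_lt_div_of_pos_right ?_ hNpos
      exact_mod_cast Nat.lt_succ_self i
    have hhlt : h ((i:ℝ)/(2:ℝ)^m) < h ((((i+1:ℕ)):ℝ)/(2:ℝ)^m) :=
      hmono (hxmem i (le_of_lt hi)) (hxmem (i+1) hi) hxlt
    rw [h1.2, h2.2] at hhlt
    by_contra hcon
    push_neg at hcon
    rcases eq_or_lt_of_le hcon with heq | hlt2
    · rw [heq] at hhlt; exact lt_irrefl _ hhlt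
    · exact absurd (hμmono _ _ hlt2 h1.1) (not_lt.mpr hhlt.le)
  have hid : ∀ j : ℕ, j ≤ 2^m → μ (m+1) j = h ((j:ℝ)/(2:ℝ)^m) := by
    intro j hj
    have hge := sigma_ge σ (2^m) hσinc 0 j (Nat.zero_le j) hj
    have hge2 := sigma_ge σ (2^m) hσinc j (2^m) hj le_rfl
    have hσN := (hσ (2^m) le_rfl).1
    have hσj : σ j = j := by omega
    rw [(hσ j hj).2, hσj]
  have hkN : k ≤ 2^m := le_trans hk (Nat.div_le_self _ _)
  have htkN : t * k ≤ 2^m := by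
    have h1 : k * t ≤ (2^m / t) * t := Nat.mul_le_mul_right t hk
    have h2 : (2^m / t) * t ≤ 2^m := Nat.div_mul_le_self _ _
    exact le_trans (le_of_eq (Nat.mul_comm t k)) (le_trans h1 h2)
  have hμk := hid k hkN
  have hμtk := hid (t*k) htkN
  have hμkmem := (hmem k hkN).1
  have hxk := hxmem k hkN
  have hinvk : hinv (μ (m+1) k) = (k:ℝ)/(2:ℝ)^m := by rw [hμk]; exact hinvl _ hxk
  have hcast : (t:ℝ) * ((k:ℝ)/(2:ℝ)^m) = ((t*k : ℕ):ℝ)/(2:ℝ)^m := by push_cast; ring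
  have hxik : xi t ((k:ℝ)/(2:ℝ)^m) = (t:ℝ) * ((k:ℝ)/(2:ℝ)^m) := by
    apply xi_eq
    · exact hxk.1
    · rw [hcast]; exact (hxmem (t*k) htkN).2
  have hpsi : ψt (μ (m+1) k) = μ (m+1) (t*k) := by
    rw [hψt _ hμkmem, hinvk, hxik, hcast, ← hμtk]
  have hinv0 : hinv 0 = 0 := by
    have hcc := hinvl 0 h01; rwa [hh0] at hcc
  have hxi0 : xi t 0 = 0 := by
    have hcc := xi_eq t 0 le_rfl (by simp)
    simpa using hcc
  have hpsi0 : ψt 0 = 0 := by rw [hψt 0 h01, hinv0, hxi0, hh0]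
  have hd00 : d0 = 0 := by
    have hcc := hd0 0 ⟨le_rfl, hp.1.le⟩
    rw [hpsi0] at hcc; linarith
  have hfin := hd0 (μ (m+1) k) ⟨hμkmem.1, hkp.le⟩
  rw [hpsi, hd00] at hfin
  linarith
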